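/- Let p ≥ 5 be prime, A ⊆ Z_p² with |A| = 2p+1, H an order-p subgroup with |A_0| ≥ (p+3)/2. If at least 3 nonzero indices i satisfy |A_0| + |A_i| - 1 ≥ p and A_i ≠ ∅, then |A +̂ A| ≥ 4p. -/
import Mathlib


open Finset

/-- The restricted sumset `A +̂ B = {a + b : a ∈ A, b ∈ B, a ≠ b}`. -/
def hadd {G : Type*} [AddCommGroup G] [DecidableEq G] (A B : Finset G) : Finset G :=
  ((A ×ˢ B).filter fun x => x.1 ≠ x.2).image fun x => x.1 + x.2

lemma mem_hadd {G : Type*} [AddCommGroup G] [DecidableEq G] {A B : Finset G} {x : G} :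
    x ∈ hadd A B ↔ ∃ a ∈ A, ∃ b ∈ B, a ≠ b ∧ a + b = x := by
  simp only [hadd, mem_image, mem_filter, mem_product, Prod.exists]
  constructor
  · rintro ⟨a, b, ⟨⟨ha, hb⟩, hne⟩, h⟩; exact ⟨a, ha, b, hb, hne, h⟩
  · rintro ⟨a, ha, b, hb, hne, h⟩; exact ⟨a, b, ⟨⟨ha, hb⟩, hne⟩, h⟩

/-- Lemma 3.3 (Case 2, `ℓ ≥ 3`). With `H` an order-`p` subgroup of `ℤ_p²` given as
the kernel of a surjective homomorphism `φ`, coset pieces `A_i = A ∩ φ⁻¹(i)`,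
`|A| = 2p+1`, and `|A_0| ≥ (p+3)/2` maximal: if at least `3` nonzero indices `i`
satisfy `A_i ≠ ∅` and `|A_0| + |A_i| - 1 ≥ p`, then `|A +̂ A| ≥ 4p`. -/
theorem lemma_3_3 {p : ℕ} [Fact p.Prime] (h5 : 5 ≤ p)
    (φ : (ZMod p × ZMod p) →+ ZMod p) (hφ : Function.Surjective φ)
    (A : Finset (ZMod p × ZMod p)) (hA : A.card = 2 * p + 1)
    (hmax : ∀ i : ZMod p, (A.filter fun a => φ a = i).card ≤
        (A.filter fun a => φ a = 0).card)
    (hA0 : p + 3 ≤ 2 * (A.filter fun a => φ a = 0).card)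
    (hl : 3 ≤ (Finset.univ.filter fun i : ZMod p => i ≠ 0 ∧
        (A.filter fun a => φ a = i).Nonempty ∧
        p + 1 ≤ (A.filter fun a => φ a = 0).card + (A.filter fun a => φ a = i).card).card) :
    4 * p ≤ (hadd A A).card := by
  classical
  have hp : p.Prime := Fact.out
  have hp0 : 0 < p := hp.pos
  set F : ZMod p → Finset (ZMod p × ZMod p) :=
    fun i => univ.filter (fun a => φ a = i) with hFdef
  -- every fiber of φ has exactly p elements
  have hconst : ∀ i : ZMod p, (F 0).card = (F i).card := by
    intro i
    obtain ⟨e, he⟩ := hφ i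
    apply Finset.card_bij (fun a _ => a + e)
    · intro a ha
      simp only [hFdef, mem_filter, mem_univ, true_and] at ha ⊢
      simp [map_add, ha, he]
    · intro a ha b hb hab
      exact add_right_cancel hab
    · intro b hb
      refine ⟨b - e, ?_, by abel⟩
      simp only [hFdef, mem_filter, mem_univ, true_and] at hb ⊢
      simp [map_sub, hb, he]
  have hsum : (univ : Finset (ZMod p × ZMod p)).card = ∑ i : ZMod p, (F i).card :=
    Finset.card_eq_sum_card_fiberwise (fun a _ => mem_univ (φ a))
  have hcardG : (univ : Finset (ZMod p × ZMod p)).card = p * p := by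
    simp [Finset.card_univ, ZMod.card]
  have hF0 : (F 0).card = p := by
    have h1 : ∑ i : ZMod p, (F i).card = ∑ _i : ZMod p, (F 0).card :=
      Finset.sum_congr rfl (fun i _ => (hconst i).symm)
    rw [hcardG, h1, Finset.sum_const, Finset.card_univ, ZMod.card, smul_eq_mul] at hsum
    exact (Nat.eq_of_mul_eq_mul_left hp0 hsum.symm)
  have hFcard : ∀ i, (F i).card = p := fun i => (hconst i).symm.trans hF0
  -- coverage of a nonzero coset i with |A_0| + |A_i| ≥ p + 1
  have cover : ∀ i : ZMod p, i ≠ 0 →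
      p + 1 ≤ (A.filter fun a => φ a = 0).card + (A.filter fun a => φ a = i).card →
      ∀ x, φ x = i → x ∈ hadd A A := by
    intro i hi hcard x hx
    set B := A.filter fun a => φ a = 0 with hB
    set C := A.filter fun a => φ a = i with hC
    set D := C.image (fun c => x - c) with hD
    have hDcard : D.card = C.card := Finset.card_image_of_injective _ sub_right_injective
    have hsub : B ∪ D ⊆ F 0 := by
      intro a ha
      simp only [hFdef, mem_filter, mem_univ, true_and]
      rcases mem_union.1 ha with h | h
      · exact (mem_filter.1 h).2
      · obtain ⟨c, hc, rfl⟩ := mem_image.1 h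
        have hcphi : φ c = i := (mem_filter.1 hc).2
        simp [map_sub, hx, hcphi]
    have hUle : (B ∪ D).card ≤ p := le_of_le_of_eq (card_le_card hsub) hF0
    have hIU := Finset.card_inter_add_card_union B D
    have hcap : 1 ≤ (B ∩ D).card := by omega
    obtain ⟨a, ha⟩ := Finset.card_pos.1 hcap
    obtain ⟨haB, haD⟩ := Finset.mem_inter.1 ha
    obtain ⟨c, hc, hac⟩ := Finset.mem_image.1 haD
    refine mem_hadd.2 ⟨a, (mem_filter.1 haB).1, c, (mem_filter.1 hc).1, ?_, ?_⟩
    · intro h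
      apply hi
      have h0 : φ a = 0 := (mem_filter.1 haB).2
      have h1 : φ c = i := (mem_filter.1 hc).2
      rw [← h1, ← h, h0]
    · rw [← hac]; abel
  -- coverage of the zero coset
  have cover0 : ∀ x, φ x = 0 → x ∈ hadd A A := by
    intro x hx
    set B := A.filter fun a => φ a = 0 with hB
    set D := B.image (fun c => x - c) with hD
    have hDcard : D.card = B.card := Finset.card_image_of_injective _ sub_right_injective
    have hsub : B ∪ D ⊆ F 0 := by
      intro a ha
      simp only [hFdef, mem_filter, mem_univ, true_and]
      rcases mem_union.1 ha with h | h
      · exact (mem_filter.1 h).2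
      · obtain ⟨c, hc, rfl⟩ := mem_image.1 h
        have hcphi : φ c = 0 := (mem_filter.1 hc).2
        simp [map_sub, hx, hcphi]
    have hUle : (B ∪ D).card ≤ p := le_of_le_of_eq (card_le_card hsub) hF0
    have hIU := Finset.card_inter_add_card_union B D
    have hcap : 3 ≤ (B ∩ D).card := by omega
    -- doubling is injective
    have h2 : ∀ a b : ZMod p × ZMod p, a + a = b + b → a = b := by
      intro a b hab
      have h2p : (2 : ZMod p) ≠ 0 := by
        have := (ZMod.natCast_eq_zero_iff 2 p).not
        intro h
        have : ((2 : ℕ) : ZMod p) = 0 := by exact_mod_cast h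
        have hdvd := (ZMod.natCast_eq_zero_iff 2 p).1 this
        have := Nat.le_of_dvd (by norm_num) hdvd
        omega
      have h1 : (2 : ZMod p) * a.1 = 2 * b.1 := by
        have := congrArg Prod.fst hab
        simpa [two_mul] using this
      have h2' : (2 : ZMod p) * a.2 = 2 * b.2 := by
        have := congrArg Prod.snd hab
        simpa [two_mul] using this
      exact Prod.ext (mul_left_cancel₀ h2p h1) (mul_left_cancel₀ h2p h2')
    have hex : ∃ a ∈ B ∩ D, a + a ≠ x := by
      by_contra hcon
      push_neg at hcon
      have hle1 : (B ∩ D).card ≤ 1 := by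
        apply Finset.card_le_one.2
        intro a ha b hb
        exact h2 a b (by rw [hcon a ha, hcon b hb])
      omega
    obtain ⟨a, ha, hax⟩ := hex
    obtain ⟨haB, haD⟩ := Finset.mem_inter.1 ha
    obtain ⟨c, hc, hac⟩ := Finset.mem_image.1 haD
    have hsum' : a + c = x := by rw [← hac]; abel
    refine mem_hadd.2 ⟨a, (mem_filter.1 haB).1, c, (mem_filter.1 hc).1, ?_, hsum'⟩
    intro h
    exact hax (by rw [h] at hsum' ⊢; exact hsum')
  -- pick three indices
  obtain ⟨S, hSsub, hScard⟩ := Finset.exists_subset_card_eq hl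
  have h0S : (0 : ZMod p) ∉ S := by
    intro h
    exact ((Finset.mem_filter.1 (hSsub h)).2.1) rfl
  set K : Finset (ZMod p) := insert 0 S with hK
  have hKcard : K.card = 4 := by
    rw [hK, Finset.card_insert_of_notMem h0S, hScard]
  have hFsub : ∀ i ∈ K, F i ⊆ hadd A A := by
    intro i hiK x hxF
    have hx : φ x = i := (Finset.mem_filter.1 hxF).2
    rcases Finset.mem_insert.1 hiK with rfl | hiS
    · exact cover0 x hx
    · have hiL := Finset.mem_filter.1 (hSsub hiS)
      exact cover i hiL.2.1 hiL.2.2.2 x hx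
  have hdisj : ∀ i ∈ K, ∀ j ∈ K, i ≠ j → Disjoint (F i) (F j) := by
    intro i _ j _ hij
    rw [Finset.disjoint_left]
    intro a hai haj
    exact hij (((Finset.mem_filter.1 hai).2).symm.trans ((Finset.mem_filter.1 haj).2))
  have hbU : (K.biUnion F).card = 4 * p := by
    rw [Finset.card_biUnion hdisj, Finset.sum_congr rfl (fun i _ => hFcard i),
      Finset.sum_const, hKcard, smul_eq_mul]
  calc 4 * p = (K.biUnion F).card := hbU.symm
    _ ≤ (hadd A A).card := Finset.card_le_card (Finset.biUnion_subset.2 hFsub)
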